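/- Let X be a subshift with the unique approximation property for d_G. Then for every p-periodic point x ∈ Σ^ℤ, the set of best approximations of x in X contains a p-periodic point of X. -/

import Mathlib

open Filter

/-- Hamming distance between `x` and `y` on the coordinate interval `[a, b]`. -/
noncomputable def hamIcc {A : Type*} (x y : ℤ → A) (a b : ℤ) : ℕ :=
  @Finset.card ℤ (@Finset.filter ℤ (fun i => x i ≠ y i) (Classical.decPred _) (Finset.Icc a b))

/-- The Besicovitch pseudodistance on `A^ℤ`. -/
noncomputable def dB {A : Type*} (x y : ℤ → A) : ℝ :=
  atTop.limsup fun n : ℕ => (hamIcc x y (-(n : ℤ)) n : ℝ) / (2 * n + 1)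

/-- The Weyl pseudodistance on `A^ℤ`. -/
noncomputable def dW {A : Type*} (x y : ℤ → A) : ℝ :=
  atTop.limsup fun n : ℕ => ⨆ m : ℤ, (hamIcc x y (m - n) (m + n) : ℝ) / (2 * n + 1)

/-- The shift map. -/
def shiftMap {A : Type*} (x : ℤ → A) : ℤ → A := fun i => x (i + 1)

/-- A subshift: a shift-invariant subset of `A^ℤ` closed in the Cantor topology. -/
def IsSubshift {A : Type*} (X : Set (ℤ → A)) : Prop :=
  (∀ x ∈ X, shiftMap x ∈ X) ∧ (∀ x ∈ X, (fun i => x (i - 1)) ∈ X) ∧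
  (∀ x : ℤ → A, (∀ n : ℕ, ∃ y ∈ X, ∀ i : ℤ, |i| ≤ (n : ℤ) → y i = x i) → x ∈ X)

/-- The word `w` occurs in (some point of) `X`. -/
def occursIn {A : Type*} (X : Set (ℤ → A)) {k : ℕ} (w : Fin k → A) : Prop :=
  ∃ x ∈ X, ∃ i : ℤ, ∀ j : Fin k, x (i + j) = w j

/-- A shift of finite type: defined by a clopen window condition. -/
def IsSFT {A : Type*} (X : Set (ℤ → A)) : Prop :=
  ∃ (k : ℕ) (P : (Fin k → A) → Prop), X = {x | ∀ i : ℤ, P (fun j => x (i + j))}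

/-- A sliding block code (cellular automaton when `A = B`) of some radius `r`. -/
def IsSlidingBlock {A B : Type*} (φ : (ℤ → A) → (ℤ → B)) : Prop :=
  ∃ (r : ℕ) (f : (Fin (2 * r + 1) → A) → B), ∀ x i, φ x i = f fun j => x (i - r + j)

/-- A sofic shift: the image of an SFT under a sliding block code. -/
def IsSofic {A : Type*} (X : Set (ℤ → A)) : Prop :=
  ∃ (B : Type) (_ : Fintype B) (Y : Set (ℤ → B)) (φ : (ℤ → B) → (ℤ → A)),
    IsSFT Y ∧ IsSlidingBlock φ ∧ X = φ '' Y

/-- Topological mixing for shift spaces, in terms of words of the language. -/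
def IsMixingShift {A : Type*} (X : Set (ℤ → A)) : Prop :=
  ∀ (k l : ℕ) (u : Fin k → A) (v : Fin l → A), occursIn X u → occursIn X v →
    ∃ N : ℕ, ∀ n ≥ N, ∃ x ∈ X, ∃ i : ℤ,
      (∀ j : Fin k, x (i + j) = u j) ∧ (∀ j : Fin l, x (i + k + n + j) = v j)

/-- Topological entropy of a shift space. -/
noncomputable def shiftEntropy {A : Type*} (X : Set (ℤ → A)) : ℝ :=
  atTop.limsup fun n : ℕ => Real.log (Set.ncard {w : Fin n → A | occursIn X w}) / n

/-- The periodic configuration `∞w∞` with period word `w`. -/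
def perPt {A : Type*} {n : ℕ} (hn : 0 < n) (w : Fin n → A) : ℤ → A := fun i =>
  w ⟨(i % (n : ℤ)).toNat, by
    have h1 : (0 : ℤ) < (n : ℤ) := by exact_mod_cast hn
    have h2 := Int.emod_nonneg i (by omega : (n : ℤ) ≠ 0)
    have h3 := Int.emod_lt_of_pos i h1
    omega⟩

/-- The density coding `U' : [0,1] → {0,1}^ℕ`: the dyadic interval of `ℕ` containing `n`
has left endpoint `2^(Nat.log 2 (n+1)) - 1` and length `L = 2^(Nat.log 2 (n+1))`; it is
filled with `⌊x·L⌋` zeros (`false`) followed by ones (`true`). -/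
noncomputable def Uprime (x : ℝ) (n : ℕ) : Bool :=
  decide (⌊x * 2 ^ Nat.log 2 (n + 1)⌋ ≤ ((n : ℤ) + 1 - 2 ^ Nat.log 2 (n + 1)))

/-- The two-sided version `T'(x) = U'(x)^R.U'(x)`. -/
noncomputable def Tprime (x : ℝ) : ℤ → Bool := fun i =>
  if 0 ≤ i then Uprime x i.toNat else Uprime x (-i - 1).toNat

/-- The one-sided Besicovitch pseudodistance. -/
noncomputable def dB1 {A : Type*} (u v : ℕ → A) : ℝ :=
  atTop.limsup fun n : ℕ =>
    ((@Finset.filter ℕ (fun i => u i ≠ v i) (Classical.decPred _) (Finset.range n)).card : ℝ) / n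

/-- `X` has the unique approximation property for the pseudometric `d`. -/
def UniqueApprox {A : Type*} (d : (ℤ → A) → (ℤ → A) → ℝ) (X : Set (ℤ → A)) : Prop :=
  ∀ y : ℤ → A, ∃ x₀ ∈ X,
    {x | x ∈ X ∧ d y x = sInf (d y '' X)} = {x | x ∈ X ∧ d x₀ x = 0}


/-!
By the unique approximation property there is a best approximation `x₀ ∈ X` whose `d`-class is
the set of all best approximations. The shift `σ^p` fixes `x` and is a `d`-isometry, so `σ^p x₀`
is a best approximation too and `d(x₀, σ^p x₀) = 0`: cut into blocks of length `p`, consecutive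
blocks of `x₀` differ on a set of density zero. Hence for each `g` almost every block position
starts a run of `g` equal blocks, and averaging the mismatch density `d(x, x₀) = m` over these
positions yields a block `w`, repeated `g` times in `x₀`, with at most `p m` mismatches against the
period of `x`. As there are finitely many blocks, one `w` serves every `g`; the subshift is closed,
so it contains `∞w∞`, which is at distance at most `m` from `x`. Lower bounds on `d` come from
`d_B` and upper bounds from `d_W`, as `d_B ≤ d ≤ d_W`.
-/

section

open Finset Function

variable {A : Type*}

section Hamming

lemma hamIcc_eq_card [DecidableEq A] (y z : ℤ → A) (a b : ℤ) :
    hamIcc y z a b = #{i ∈ Icc a b | y i ≠ z i} := by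
  unfold hamIcc
  congr

lemma hamIcc_self (z : ℤ → A) (a b : ℤ) : hamIcc z z a b = 0 := by
  simp [hamIcc]

lemma hamIcc_window_le (y z : ℤ → A) (a : ℤ) (n : ℕ) :
    (hamIcc y z (a - n) (a + n) : ℝ) ≤ 2 * n + 1 := by
  classical
  have : hamIcc y z (a - n) (a + n) ≤ 2 * n + 1 := by
    rw [hamIcc_eq_card]
    refine (card_filter_le _ _).trans ?_
    rw [Int.card_Icc]
    omega
  exact_mod_cast this

lemma hamIcc_window_div_le_one (y z : ℤ → A) (a : ℤ) (n : ℕ) :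
    (hamIcc y z (a - n) (a + n) : ℝ) / (2 * n + 1) ≤ 1 :=
  div_le_one_of_le₀ (hamIcc_window_le y z a n) (by positivity)

lemma hamIcc_comp_add (y z : ℤ → A) (s a b : ℤ) :
    hamIcc (fun i => y (i + s)) (fun i => z (i + s)) a b = hamIcc y z (a + s) (b + s) := by
  classical
  rw [hamIcc_eq_card, hamIcc_eq_card, ← map_add_right_Icc, filter_map, card_map]
  rfl

lemma hamIcc_add_le (y z : ℤ → A) (a b : ℤ) (s : ℕ) :
    hamIcc y z (a + s) (b + s) ≤ hamIcc y z a b + s := by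
  classical
  simp only [hamIcc_eq_card]
  calc #{i ∈ Icc (a + s) (b + s) | y i ≠ z i}
      ≤ #{i ∈ Icc a b ∪ Icc (b + 1) (b + s) | y i ≠ z i} := by
        refine card_le_card (filter_subset_filter _ fun i hi => ?_)
        simp only [mem_union, mem_Icc] at hi ⊢
        omega
    _ ≤ #{i ∈ Icc a b | y i ≠ z i} + #{i ∈ Icc (b + 1) (b + s) | y i ≠ z i} := by
        rw [filter_union]
        exact card_union_le _ _
    _ ≤ #{i ∈ Icc a b | y i ≠ z i} + s := by
        gcongr
        refine (card_filter_le _ _).trans ?_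
        simp

end Hamming

section Limsup

lemma limsup_le_limsup_of_le_add {u v e : ℕ → ℝ} (hu : ∀ n, 0 ≤ u n)
    (hv₀ : IsBoundedUnder (· ≥ ·) atTop v) (hv₁ : IsBoundedUnder (· ≤ ·) atTop v)
    (he : Tendsto e atTop (nhds 0)) (h : ∀ n, u n ≤ v n + e n) :
    limsup u atTop ≤ limsup v atTop :=
  calc limsup u atTop ≤ limsup (v + e) atTop :=
        limsup_le_limsup (Eventually.of_forall h) (isCoboundedUnder_le_of_le _ hu)
          (isBoundedUnder_le_add hv₁ he.isBoundedUnder_le)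
    _ ≤ limsup v atTop + limsup e atTop :=
        limsup_add_le hv₀ hv₁ he.isCoboundedUnder_le he.isBoundedUnder_le
    _ = limsup v atTop := by rw [he.limsup_eq, add_zero]

lemma tendsto_const_div_two_mul_add_one (C : ℝ) :
    Tendsto (fun n : ℕ => C / (2 * n + 1)) atTop (nhds 0) :=
  tendsto_const_nhds.div_atTop <| tendsto_atTop_add_const_right _ _ <|
    tendsto_natCast_atTop_atTop.const_mul_atTop two_pos

end Limsup

section Distances

lemma dB_nonneg (y z : ℤ → A) : 0 ≤ dB y z :=
  le_limsup_of_frequently_le (Frequently.of_forall fun n => by positivity)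
    (isBoundedUnder_of ⟨1, fun n => by simpa using hamIcc_window_div_le_one y z 0 n⟩)

lemma dW_self (z : ℤ → A) : dW z z = 0 := by
  simp [dW, hamIcc_self]

lemma dB_le_dW (y z : ℤ → A) : dB y z ≤ dW y z := by
  refine limsup_le_limsup (Eventually.of_forall fun n => ?_)
    (isCoboundedUnder_le_of_le _ fun n => by positivity)
    (isBoundedUnder_of ⟨1, fun n => ciSup_le fun a => hamIcc_window_div_le_one y z a n⟩)
  simpa using le_ciSup (f := fun a : ℤ => (hamIcc y z (a - n) (a + n) : ℝ) / (2 * n + 1))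
    ⟨1, Set.forall_mem_range.2 fun a => hamIcc_window_div_le_one y z a n⟩ 0

lemma dB_comp_add_le (y z : ℤ → A) (s : ℕ) :
    dB (fun i => y (i + s)) (fun i => z (i + s)) ≤ dB y z := by
  unfold dB
  refine limsup_le_limsup_of_le_add (fun n => by positivity)
    (isBoundedUnder_of ⟨0, fun n => by positivity⟩)
    (isBoundedUnder_of ⟨1, fun n => by simpa using hamIcc_window_div_le_one y z 0 n⟩)
    (tendsto_const_div_two_mul_add_one s) fun n => ?_
  rw [hamIcc_comp_add, ← add_div]
  gcongr
  exact_mod_cast hamIcc_add_le y z (-n) n s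

lemma dW_comp_add (y z : ℤ → A) (s : ℤ) :
    dW (fun i => y (i + s)) (fun i => z (i + s)) = dW y z := by
  unfold dW
  congr 1
  funext n
  simp only [hamIcc_comp_add, sub_add_eq_add_sub, add_right_comm _ (n : ℤ) s]
  exact (Equiv.addRight s).iSup_comp (g := fun a => (hamIcc y z (a - n) (a + n) : ℝ) / (2 * n + 1))

lemma eventually_hamIcc_lt_of_dB_le {y z : ℤ → A} {c : ℝ} (h : dB y z ≤ c) {p : ℕ} (hp : 0 < p)
    {ε : ℝ} (hε : 0 < ε) :
    ∀ᶠ N : ℕ in atTop, (hamIcc y z (-(N * p)) (N * p) : ℝ) < (c + ε) * (2 * (N * p) + 1) := by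
  have hn : ∀ᶠ n : ℕ in atTop, (hamIcc y z (-(n : ℤ)) n : ℝ) / (2 * n + 1) < c + ε :=
    eventually_lt_of_limsup_lt (h.trans_lt (lt_add_of_pos_right c hε))
      (isBoundedUnder_of ⟨1, fun n => by simpa using hamIcc_window_div_le_one y z 0 n⟩)
  have hNp : Tendsto (fun N : ℕ => N * p) atTop atTop :=
    tendsto_atTop_mono (fun N => Nat.le_mul_of_pos_right N hp) tendsto_id
  filter_upwards [hNp.eventually hn] with N hN
  rw [div_lt_iff₀ (by positivity)] at hN
  exact_mod_cast hN

end Distances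

section Blocks

def block (p : ℕ) (y : ℤ → A) (k : ℤ) : Fin p → A := fun j => y (k * p + j)

variable {p : ℕ}

lemma block_comp_add_mul (y : ℤ → A) (c k : ℤ) :
    block p (fun i => y (i + c * p)) k = block p y (k + c) := by
  funext j
  simp only [block]
  congr 1
  ring

lemma block_eq_block_zero {y : ℤ → A} (hy : Periodic y p) (k : ℤ) :
    block p y k = block p y 0 := by
  funext j
  simpa [block, add_comm] using hy.int_mul k j

lemma block_perPt (hp : 0 < p) (w : Fin p → A) (k : ℤ) : block p (perPt hp w) k = w := by
  funext j
  simp only [block, perPt]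
  congr 1
  ext
  have := j.isLt
  simp [Int.add_emod, Int.emod_eq_of_lt (Int.natCast_nonneg j) (by omega : (j : ℤ) < p)]

lemma perPt_periodic (hp : 0 < p) (w : Fin p → A) : Periodic (perPt hp w) p := fun i => by
  simp only [perPt, Int.add_emod_right]

lemma apply_eq_perPt (hp : 0 < p) {y : ℤ → A} {w : Fin p → A} {i : ℤ}
    (h : block p y (i / p) = w) : y i = perPt hp w i := by
  have hi : i / p * p + ((i % p).toNat : ℕ) = i := by
    rw [Int.toNat_of_nonneg (Int.emod_nonneg _ (by omega))]
    exact Int.ediv_mul_add_emod i p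
  rw [← h]
  exact (congrArg y hi).symm

lemma card_filter_Ico_block [DecidableEq A] (y z : ℤ → A) (k : ℤ) :
    #{i ∈ Ico (k * p) (k * p + p) | y i ≠ z i} = hammingDist (block p y k) (block p z k) := by
  unfold hammingDist
  refine card_bij' (fun i hi => (⟨(i - k * p).toNat, ?_⟩ : Fin p)) (fun j _ => k * p + j)
    ?_ ?_ ?_ ?_
  · simp only [mem_filter, mem_Ico] at hi
    omega
  · intro i hi
    simp only [mem_filter, mem_Ico] at hi
    refine mem_filter.2 ⟨mem_univ _, ?_⟩
    simpa [block, Int.toNat_of_nonneg (a := i - k * p) (by omega)] using hi.2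
  · intro j hj
    exact mem_filter.2 ⟨mem_Ico.2 ⟨by omega, by omega⟩, (mem_filter.1 hj).2⟩
  · intro i hi
    simp only [mem_filter, mem_Ico] at hi
    simp only
    omega
  · intro j hj
    ext
    simp

lemma card_filter_Ico_mul_eq_sum [DecidableEq A] (y z : ℤ → A) {a c : ℤ} (hac : a ≤ c) :
    #{i ∈ Ico (a * p) (c * p) | y i ≠ z i} =
      ∑ k ∈ Ico a c, hammingDist (block p y k) (block p z k) := by
  induction c, hac using Int.leInduction with
  | base => simp
  | succ c hac ih =>
    have hp : (0 : ℤ) ≤ p := Int.natCast_nonneg p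
    rw [← Ico_union_Ico_eq_Ico hac (by omega : c ≤ c + 1),
      sum_union (Ico_disjoint_Ico_consecutive _ _ _), ← ih, Ico_add_one_right_eq_Icc, Icc_self,
      sum_singleton, ← card_filter_Ico_block, ← card_union_of_disjoint
        (disjoint_filter_filter (Ico_disjoint_Ico_consecutive _ _ _)), ← filter_union,
      Ico_union_Ico_eq_Ico (mul_le_mul_of_nonneg_right hac hp) (by linarith), add_mul, one_mul]

lemma sum_hammingDist_block_le [DecidableEq A] (y z : ℤ → A) (N : ℕ) :
    ∑ k ∈ Ico (-(N : ℤ)) N, hammingDist (block p y k) (block p z k) ≤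
      hamIcc y z (-(N * p)) (N * p) := by
  rw [← card_filter_Ico_mul_eq_sum y z (by omega), hamIcc_eq_card, neg_mul]
  exact card_le_card (filter_subset_filter _ Ico_subset_Icc_self)

lemma card_filter_ne_le_sum_hammingDist {ι κ : Type*} [Fintype ι] {β : ι → Type*}
    [∀ i, DecidableEq (β i)] (s : Finset κ) (u v : κ → ∀ i, β i) :
    #{k ∈ s | u k ≠ v k} ≤ ∑ k ∈ s, hammingDist (u k) (v k) := by
  rw [card_filter]
  refine sum_le_sum fun k _ => ?_
  split_ifs with h
  exacts [hammingDist_pos.2 h, Nat.zero_le _]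

end Blocks

section Periodic

variable [DecidableEq A] {p : ℕ} {y z : ℤ → A}

lemma hamIcc_window_le_of_periodic (hp : 0 < p) (hy : Periodic y p) (hz : Periodic z p)
    (a : ℤ) (n : ℕ) :
    (hamIcc y z (a - n) (a + n) : ℝ) ≤
      (2 * n / p + 2) * hammingDist (block p y 0) (block p z 0) := by
  have hpz : (0 : ℤ) < p := by exact_mod_cast hp
  set a' := (a - n) / p
  obtain ⟨r, hr⟩ : ∃ r, r = 2 * n / p := ⟨_, rfl⟩
  -- the window meets at most `r + 2` of the aligned blocks `[k p, (k + 1) p)`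
  have hcount : hamIcc y z (a - n) (a + n) ≤ (r + 2) * hammingDist (block p y 0) (block p z 0) := by
    have h1 := Int.ediv_mul_le (a - n) hpz.ne'
    have h2 := Int.lt_ediv_add_one_mul_self (a - n) hpz
    have h3 : ((2 * n : ℕ) : ℤ) < (r : ℤ) * p + p := by
      exact_mod_cast hr ▸ Nat.lt_div_mul_add hp
    calc hamIcc y z (a - n) (a + n)
        ≤ #{i ∈ Ico (a' * p) ((a' + (r + 2 : ℕ)) * p) | y i ≠ z i} := by
          rw [hamIcc_eq_card]
          refine card_le_card (filter_subset_filter _ fun i hi => ?_)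
          rw [mem_Icc] at hi
          rw [mem_Ico]
          push_cast at h3 ⊢
          constructor <;> nlinarith
      _ = (r + 2) * hammingDist (block p y 0) (block p z 0) := by
          rw [card_filter_Ico_mul_eq_sum y z (by omega)]
          simp only [block_eq_block_zero hy, block_eq_block_zero hz, sum_const, Int.card_Ico,
            smul_eq_mul]
          congr
          omega
  have hq : ((r + 2 : ℕ) : ℝ) ≤ 2 * n / p + 2 := by
    push_cast
    gcongr
    exact_mod_cast hr ▸ Nat.cast_div_le (α := ℝ) (m := 2 * n) (n := p)
  calc (hamIcc y z (a - n) (a + n) : ℝ)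
      ≤ ((r + 2 : ℕ) : ℝ) * hammingDist (block p y 0) (block p z 0) := by exact_mod_cast hcount
    _ ≤ _ := by gcongr

lemma dW_le_of_periodic (hp : 0 < p) (hy : Periodic y p) (hz : Periodic z p) :
    dW y z ≤ hammingDist (block p y 0) (block p z 0) / p := by
  set c := hammingDist (block p y 0) (block p z 0)
  have hwindow : ∀ (a : ℤ) (n : ℕ),
      (hamIcc y z (a - n) (a + n) : ℝ) / (2 * n + 1) ≤ c / p + 2 * c / (2 * n + 1) := by
    intro a n
    rw [div_le_iff₀ (by positivity)]
    calc (hamIcc y z (a - n) (a + n) : ℝ) ≤ (2 * n / p + 2) * c :=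
          hamIcc_window_le_of_periodic hp hy hz a n
      _ = c / p * (2 * n) + 2 * c := by ring
      _ ≤ c / p * (2 * n + 1) + 2 * c := by gcongr; linarith
      _ = (c / p + 2 * c / (2 * n + 1)) * (2 * n + 1) := by field_simp
  have hlim : Tendsto (fun n : ℕ => c / p + 2 * c / (2 * n + 1 : ℝ)) atTop (nhds (c / p)) := by
    simpa using tendsto_const_nhds.add (tendsto_const_div_two_mul_add_one (2 * c))
  unfold dW
  exact (limsup_le_limsup (Eventually.of_forall fun n => ciSup_le fun a => hwindow a n)
    (isCoboundedUnder_le_of_le _ fun n => Real.iSup_nonneg fun a => by positivity)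
    hlim.isBoundedUnder_le).trans hlim.limsup_eq.le

end Periodic

section Runs

def HasRun {β : Type*} (b : ℤ → β) (w : β) (g : ℕ) : Prop :=
  ∃ k : ℤ, ∀ t < g, b (k + t) = w

variable {β : Type*}

lemma HasRun.mono {b : ℤ → β} {w : β} {g g' : ℕ} (h : HasRun b w g') (hg : g ≤ g') :
    HasRun b w g :=
  let ⟨k, hk⟩ := h
  ⟨k, fun t ht => hk t (ht.trans_le hg)⟩

variable (b : ℤ → β)

lemma exists_lt_ne_add_one_of_ne (k : ℤ) {t : ℕ} (h : b (k + t) ≠ b k) :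
    ∃ s < t, b (k + s) ≠ b (k + s + 1) := by
  induction t with
  | zero => simp at h
  | succ t ih =>
    by_cases ht : b (k + t) = b k
    · refine ⟨t, t.lt_succ_self, fun h' => h ?_⟩
      push_cast
      rw [← add_assoc, ← h', ht]
    · obtain ⟨s, hs, hne⟩ := ih ht
      exact ⟨s, hs.trans t.lt_succ_self, hne⟩

/-- A position that does not start a run of length `g` lies less than `g` steps before a jump
`b j ≠ b (j + 1)` or before the right end `c`. -/
lemma card_filter_not_run_le [DecidableEq β] (g : ℕ) (a c : ℤ) :
    #{k ∈ Ico a c | ¬∀ t < g, b (k + t) = b k} ≤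
      g * (#{j ∈ Ico a c | b j ≠ b (j + 1)} + 1) := by
  set J := {j ∈ Ico a c | b j ≠ b (j + 1)}
  have hsub : {k ∈ Ico a c | ¬∀ t < g, b (k + t) = b k} ⊆
      Ico (c - g) c ∪ J.biUnion fun j => Ioc (j - g) j := by
    intro k hk
    simp only [mem_filter, mem_Ico, not_forall] at hk
    obtain ⟨⟨hak, hkc⟩, t, ht, hne⟩ := hk
    obtain ⟨s, hst, hs⟩ := exists_lt_ne_add_one_of_ne b k hne
    rw [mem_union, mem_Ico, mem_biUnion]
    by_cases hsc : k + s < c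
    · exact Or.inr ⟨k + s, mem_filter.2 ⟨mem_Ico.2 ⟨by omega, hsc⟩, hs⟩,
        mem_Ioc.2 ⟨by omega, by omega⟩⟩
    · exact Or.inl ⟨by omega, hkc⟩
  calc #{k ∈ Ico a c | ¬∀ t < g, b (k + t) = b k}
      ≤ #(Ico (c - g) c) + #(J.biUnion fun j => Ioc (j - g) j) :=
        (card_le_card hsub).trans (card_union_le _ _)
    _ ≤ g + #J * g := add_le_add (by simp) (card_biUnion_le_card_mul _ _ _ fun j _ => by simp)
    _ = g * (#J + 1) := by ring

variable {b}

lemma mul_card_le_sum_add [DecidableEq β] {f : ℤ → ℝ} {C : ℝ} (hC : 0 ≤ C) (hf : ∀ k, 0 ≤ f k)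
    {g : ℕ} (hgood : ∀ k, (∀ t < g, b (k + t) = b k) → C ≤ f k) (a c : ℤ) :
    C * #(Ico a c) ≤ ∑ k ∈ Ico a c, f k + C * g * (#{j ∈ Ico a c | b j ≠ b (j + 1)} + 1) := by
  set G := {k ∈ Ico a c | ∀ t < g, b (k + t) = b k}
  have hsum : C * #G ≤ ∑ k ∈ Ico a c, f k := by
    rw [mul_comm, ← nsmul_eq_mul]
    exact (card_nsmul_le_sum G f C fun k hk => hgood k (mem_filter.1 hk).2).trans
      (sum_le_sum_of_subset_of_nonneg (filter_subset _ _) fun k _ _ => hf k)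
  have hcard : (#(Ico a c) : ℝ) ≤ #G + g * (#{j ∈ Ico a c | b j ≠ b (j + 1)} + 1) := by
    have hsplit : #G + #{k ∈ Ico a c | ¬∀ t < g, b (k + t) = b k} = #(Ico a c) :=
      card_filter_add_card_filter_not _
    have hbad := card_filter_not_run_le b g a c
    exact_mod_cast (by omega : #(Ico a c) ≤ #G + g * (#{j ∈ Ico a c | b j ≠ b (j + 1)} + 1))
  nlinarith

end Runs

section Subshift

variable {X : Set (ℤ → A)}

lemma IsSubshift.comp_add_mem (hX : IsSubshift X) {z : ℤ → A} (hz : z ∈ X) (s : ℤ) :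
    (fun i => z (i + s)) ∈ X := by
  induction s using Int.induction_on with
  | zero => simpa using hz
  | succ s ih =>
    convert hX.1 _ ih using 2 with i
    simp only [shiftMap]
    ring_nf
  | pred s ih =>
    convert hX.2.1 _ ih using 2 with i
    ring_nf

lemma IsSubshift.perPt_mem (hX : IsSubshift X) {x₀ : ℤ → A} (hx₀ : x₀ ∈ X) {p : ℕ} (hp : 0 < p)
    {w : Fin p → A} (hrun : ∀ g, HasRun (block p x₀) w g) : perPt hp w ∈ X := by
  refine hX.2.2 _ fun n => ?_
  obtain ⟨k, hk⟩ := hrun (2 * n + 1)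
  refine ⟨fun i => x₀ (i + (k + n) * p), hX.comp_add_mem hx₀ _, fun i hi =>
    apply_eq_perPt (y := fun i => x₀ (i + (k + n) * p)) hp ?_⟩
  have hpz : (0 : ℤ) < p := by exact_mod_cast hp
  have h1 : -(n : ℤ) ≤ i / p := (Int.le_ediv_iff_mul_le hpz).2 (by nlinarith [abs_le.1 hi])
  have h2 : i / p < n + 1 := (Int.ediv_lt_iff_lt_mul hpz).2 (by nlinarith [abs_le.1 hi])
  rw [block_comp_add_mul, ← hk (i / p + n).toNat (by omega)]
  congr 1
  omega

end Subshift

lemma exists_pos_forall_add_le_of_lt {ι : Type*} [Finite ι] (f : ι → ℝ) (c : ℝ) :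
    ∃ δ > 0, ∀ i, c < f i → c + δ ≤ f i := by
  have : ∀ᶠ δ in nhdsWithin (0 : ℝ) (Set.Ioi 0), 0 < δ ∧ ∀ i, c < f i → c + δ ≤ f i := by
    refine eventually_mem_nhdsWithin.and (eventually_all.2 fun i => ?_)
    by_cases h : c < f i
    · filter_upwards [nhdsWithin_le_nhds (gt_mem_nhds (sub_pos.2 h))] with δ hδ _
      linarith
    · exact Eventually.of_forall fun _ h' => (h h').elim
  obtain ⟨δ, hδ, h⟩ := this.exists
  exact ⟨δ, hδ, h⟩

lemma Finite.exists_forall_mem_of_antitone {α : Type*} [Finite α] {s : ℕ → Set α}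
    (hs : Antitone s) (hne : ∀ n, (s n).Nonempty) : ∃ a, ∀ n, a ∈ s n := by
  by_contra! h
  obtain ⟨n, hn⟩ := (eventually_all.2 fun a => (h a).elim fun n hn =>
    eventually_ge_atTop n |>.mono fun m hm hma => hn (hs hm hma)).exists (f := atTop)
  obtain ⟨a, ha⟩ := hne n
  exact hn a ha

lemma le_mul_of_forall_two_mul_le {p : ℕ} (hp : 0 < p) {m C K : ℝ} (hK : 0 ≤ K) {u v : ℕ → ℝ}
    (hu : ∀ ε > 0, ∀ᶠ N : ℕ in atTop, u N < (m + ε) * (2 * (N * p) + 1))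
    (hv : ∀ ε > 0, ∀ᶠ N : ℕ in atTop, v N < ε * (2 * (N * p) + 1))
    (h : ∀ N : ℕ, C * (2 * N) ≤ u N + K * (v N + 1)) : C ≤ p * m := by
  by_contra! hC
  obtain ⟨δ, hδ, rfl⟩ : ∃ δ > 0, C = p * m + δ := ⟨C - p * m, by linarith, by ring⟩
  have hpR : (0 : ℝ) < p := by exact_mod_cast hp
  -- the `ε`-errors in `u N` and `K v N` then cost `δ / 2` per unit density, half the gain `δ`
  set ε := δ / (2 * p * (1 + K))
  have hε : 0 < ε := by positivity
  have hεp : p * ε * (1 + K) = δ / 2 := by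
    simp only [ε]
    field_simp
  obtain ⟨N, hNu, hNv, hN⟩ := ((hu ε hε).and ((hv ε hε).and
    (eventually_ge_atTop ⌈(p * m + δ + p * K) / δ⌉₊))).exists
  have hNδ : p * m + δ + p * K ≤ N * δ :=
    (div_le_iff₀ hδ).1 ((Nat.le_ceil _).trans (by exact_mod_cast hN))
  have hNp : δ * N ≤ δ * (N * p) := by
    gcongr
    exact le_mul_of_one_le_right (Nat.cast_nonneg N) (by exact_mod_cast hp)
  have hKv := mul_le_mul_of_nonneg_left hNv.le hK
  have hbound : p * ((p * m + δ) * (2 * N)) <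
      p * ((m + ε) * (2 * (N * p) + 1) + K * (ε * (2 * (N * p) + 1) + 1)) := by
    gcongr
    linarith [h N]
  have hexpand : p * ((m + ε) * (2 * (N * p) + 1) + K * (ε * (2 * (N * p) + 1) + 1)) =
      p * m * (2 * (N * p) + 1) + δ / 2 * (2 * (N * p) + 1) + p * K := by
    rw [← hεp]
    ring
  nlinarith

section Approximation

variable [DecidableEq A] {p : ℕ}

lemma mul_two_mul_le_hamIcc_add {y z : ℤ → A} {C : ℝ} (hC : 0 ≤ C) {g : ℕ}
    (hgood : ∀ k, (∀ t < g, block p z (k + t) = block p z k) →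
      C ≤ hammingDist (block p y k) (block p z k)) (N : ℕ) :
    C * (2 * N) ≤ hamIcc y z (-(N * p)) (N * p) +
      C * g * (hamIcc z (fun i => z (i + p)) (-(N * p)) (N * p) + 1) := by
  have hshift : ∀ j, block p (fun i => z (i + p)) j = block p z (j + 1) := fun j => by
    simpa using block_comp_add_mul z 1 j
  have hcount := mul_card_le_sum_add hC (fun k => Nat.cast_nonneg _) hgood (-N) N
  have hsum : ∑ k ∈ Ico (-(N : ℤ)) N, (hammingDist (block p y k) (block p z k) : ℝ) ≤
      hamIcc y z (-(N * p)) (N * p) := by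
    exact_mod_cast sum_hammingDist_block_le y z N
  have hjumps : #{j ∈ Ico (-(N : ℤ)) N | block p z j ≠ block p z (j + 1)} ≤
      hamIcc z (fun i => z (i + p)) (-(N * p)) (N * p) :=
    calc _ ≤ ∑ j ∈ Ico (-(N : ℤ)) N, hammingDist (block p z j) (block p z (j + 1)) :=
          card_filter_ne_le_sum_hammingDist _ _ _
      _ ≤ _ := by
          simpa only [hshift] using sum_hammingDist_block_le (p := p) z (fun i => z (i + p)) N
  have hcard : (#(Ico (-(N : ℤ)) N) : ℝ) = 2 * N := by
    rw [Int.card_Ico, sub_neg_eq_add, ← two_mul]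
    norm_cast
  rw [hcard] at hcount
  have hjumps' := mul_le_mul_of_nonneg_left (by exact_mod_cast hjumps :
    (#{j ∈ Ico (-(N : ℤ)) N | block p z j ≠ block p z (j + 1)} : ℝ) ≤
      hamIcc z (fun i => z (i + p)) (-(N * p)) (N * p)) (mul_nonneg hC (Nat.cast_nonneg g))
  nlinarith

variable [Finite A] {x x₀ : ℤ → A} {m : ℝ}

lemma exists_hasRun_hammingDist_le (hp : 0 < p) (hx : Periodic x p) (hm : dB x x₀ ≤ m)
    (h₀ : dB x₀ (fun i => x₀ (i + p)) ≤ 0) (g : ℕ) :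
    ∃ w, HasRun (block p x₀) w g ∧ (hammingDist (block p x 0) w : ℝ) ≤ p * m := by
  -- there are finitely many blocks, so those worse than `p m` are worse by a uniform `δ`
  obtain ⟨δ, hδ, hgap⟩ :=
    exists_pos_forall_add_le_of_lt (fun w : Fin p → A => (hammingDist (block p x 0) w : ℝ)) (p * m)
  by_contra! H
  have hC : 0 ≤ p * m + δ := by
    have := (dB_nonneg x x₀).trans hm
    positivity
  have hgood : ∀ k, (∀ t < g, block p x₀ (k + t) = block p x₀ k) →
      p * m + δ ≤ hammingDist (block p x k) (block p x₀ k) := fun k hk => by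
    rw [block_eq_block_zero hx]
    exact hgap _ (H _ ⟨k, hk⟩)
  have := le_mul_of_forall_two_mul_le hp (mul_nonneg hC (Nat.cast_nonneg g))
    (fun ε hε => eventually_hamIcc_lt_of_dB_le hm hp hε)
    (fun ε hε => by simpa using eventually_hamIcc_lt_of_dB_le h₀ hp hε)
    (mul_two_mul_le_hamIcc_add hC hgood)
  linarith

lemma exists_forall_hasRun_hammingDist_le (hp : 0 < p) (hx : Periodic x p) (hm : dB x x₀ ≤ m)
    (h₀ : dB x₀ (fun i => x₀ (i + p)) ≤ 0) :
    ∃ w, (∀ g, HasRun (block p x₀) w g) ∧ (hammingDist (block p x 0) w : ℝ) ≤ p * m := by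
  obtain ⟨w, hw⟩ := Finite.exists_forall_mem_of_antitone
    (s := fun g => {w | HasRun (block p x₀) w g ∧ (hammingDist (block p x 0) w : ℝ) ≤ p * m})
    (fun _ _ hg _ hw => ⟨hw.1.mono hg, hw.2⟩) (exists_hasRun_hammingDist_le hp hx hm h₀)
  exact ⟨w, fun g => (hw g).1, (hw 0).2⟩

end Approximation

section BestApproximation

variable {d : (ℤ → A) → (ℤ → A) → ℝ} {X : Set (ℤ → A)}

lemma UniqueApprox.exists_best_approx_dist_shift_eq_zero (huap : UniqueApprox d X)
    (hX : IsSubshift X) (hnonneg : ∀ y z, 0 ≤ d y z) (hself : ∀ z, d z z = 0) {p : ℕ}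
    (hshift : ∀ y z : ℤ → A, d (fun i => y (i + p)) (fun i => z (i + p)) ≤ d y z)
    {x : ℤ → A} (hx : Periodic x p) :
    ∃ x₀ ∈ X, d x x₀ = sInf (d x '' X) ∧ d x₀ (fun i => x₀ (i + p)) = 0 := by
  have hbdd : BddBelow (d x '' X) := ⟨0, by rintro _ ⟨z, -, rfl⟩; exact hnonneg x z⟩
  obtain ⟨x₀, hx₀X, hbest⟩ := huap x
  have hbest_iff : ∀ z ∈ X, d x z = sInf (d x '' X) ↔ d x₀ z = 0 := fun z hz => by
    simpa [hz] using Set.ext_iff.1 hbest z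
  have hx₀ : d x x₀ = sInf (d x '' X) := (hbest_iff x₀ hx₀X).2 (hself x₀)
  have hx₁X : (fun i => x₀ (i + p)) ∈ X := hX.comp_add_mem hx₀X p
  -- `σ^p` fixes `x` and does not increase `d`, so it maps the best approximation `x₀` to another
  refine ⟨x₀, hx₀X, hx₀, (hbest_iff _ hx₁X).1 (le_antisymm ?_ (csInf_le hbdd ⟨_, hx₁X, rfl⟩))⟩
  calc d x (fun i => x₀ (i + p)) = d (fun i => x (i + p)) (fun i => x₀ (i + p)) := by
        rw [funext hx]
    _ ≤ d x x₀ := hshift x x₀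
    _ = sInf (d x '' X) := hx₀

end BestApproximation

end

/-- if `X` has the unique approximation property, then every
`p`-periodic point has a `p`-periodic best approximation in `X`. -/
theorem unique_approx_periodic {A : Type*} [Fintype A]
    (d : (ℤ → A) → (ℤ → A) → ℝ) (hd : d = dB (A := A) ∨ d = dW (A := A))
    (X : Set (ℤ → A)) (hX : IsSubshift X) (huap : UniqueApprox d X)
    (p : ℕ) (hp : 0 < p) (x : ℤ → A) (hxper : ∀ i, x (i + p) = x i) :
    ∃ y ∈ X, (∀ i, y (i + p) = y i) ∧ d x y = sInf (d x '' X) := by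
  classical
  have hB : ∀ y z, dB y z ≤ d y z := by
    rcases hd with rfl | rfl
    exacts [fun _ _ => le_rfl, dB_le_dW]
  have hW : ∀ y z, d y z ≤ dW y z := by
    rcases hd with rfl | rfl
    exacts [dB_le_dW, fun _ _ => le_rfl]
  have hshift : ∀ y z : ℤ → A, d (fun i => y (i + p)) (fun i => z (i + p)) ≤ d y z := by
    rcases hd with rfl | rfl
    exacts [fun y z => dB_comp_add_le y z p, fun y z => (dW_comp_add y z p).le]
  have hnonneg : ∀ y z, 0 ≤ d y z := fun y z => (dB_nonneg y z).trans (hB y z)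
  obtain ⟨x₀, hx₀X, hx₀, hx₁⟩ := huap.exists_best_approx_dist_shift_eq_zero hX hnonneg
    (fun z => le_antisymm ((hW z z).trans (dW_self z).le) (hnonneg z z)) hshift hxper
  obtain ⟨w, hrun, hw⟩ := exists_forall_hasRun_hammingDist_le hp hxper ((hB x x₀).trans hx₀.le)
    ((hB _ _).trans hx₁.le)
  have hwX : perPt hp w ∈ X := hX.perPt_mem hx₀X hp hrun
  refine ⟨perPt hp w, hwX, perPt_periodic hp w, le_antisymm ?_
    (csInf_le ⟨0, by rintro _ ⟨z, -, rfl⟩; exact hnonneg x z⟩ ⟨_, hwX, rfl⟩)⟩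
  calc d x (perPt hp w) ≤ dW x (perPt hp w) := hW _ _
    _ ≤ hammingDist (block p x 0) w / p := by
        simpa only [block_perPt] using dW_le_of_periodic hp hxper (perPt_periodic hp w)
    _ ≤ sInf (d x '' X) := by
        rw [div_le_iff₀ (by exact_mod_cast hp)]
        linarith
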